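/- arXiv:1808.07278 — 7 statements merged into one kernel-verified Lean document; each statement's English description precedes it below -/
import Mathlib

section
/- In any tqBa5, the map f : K_I → K_C defined by f(α) = C(α) (the restriction of γ∘e_I) is an order isomorphism between the left kernel K_I = {Ia : a ∈ L} and right kernel K_C = {Ca : a ∈ L}. -/
/-!
Axiom T5 says that `C` fixes every element `I a` of the left kernel, and applying `¬` to it gives
`I (¬ I b) = ¬ I b`, so every `C a = ¬ I (¬ a)` is itself of the form `I _`. Hence the two kernels
are the same subset of `L`, and `f` is the identity of that subset.
-/

section

variable {L : Type*} {neg I : L → L}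

theorem I_neg_I_eq (neg_neg : ∀ a : L, neg (neg a) = a)
    (T5 : ∀ a : L, neg (I (neg (I a))) = I a) (b : L) : I (neg (I b)) = neg (I b) := by
  simpa only [neg_neg] using congrArg neg (T5 b)

theorem leftKernel_eq_rightKernel (neg_neg : ∀ a : L, neg (neg a) = a)
    (T5 : ∀ a : L, neg (I (neg (I a))) = I a) :
    {x : L | ∃ a : L, x = I a} = {x : L | ∃ a : L, x = neg (I (neg a))} := by
  ext x
  constructor
  · rintro ⟨a, rfl⟩
    exact ⟨I a, (T5 a).symm⟩
  · rintro ⟨a, rfl⟩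
    exact ⟨neg (I (neg a)), (I_neg_I_eq neg_neg T5 (neg a)).symm⟩

end

theorem stmt10_general {L : Type*} [DistribLattice L] (neg I : L → L)
    (neg_neg : ∀ a : L, neg (neg a) = a)
    (T5 : ∀ a : L, neg (I (neg (I a))) = I a) :
    ∃ f : {x : L // ∃ a : L, x = I a} ≃o {x : L // ∃ a : L, x = neg (I (neg a))},
      ∀ α : {x : L // ∃ a : L, x = I a}, (f α : L) = neg (I (neg (α : L))) := by
  refine ⟨OrderIso.setCongr _ _ (leftKernel_eq_rightKernel neg_neg T5), ?_⟩
  rintro ⟨_, a, rfl⟩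
  exact (T5 a).symm

theorem stmt10 {L : Type*} [DistribLattice L] [BoundedOrder L] (neg I : L → L)
    (neg_neg : ∀ a : L, neg (neg a) = a)
    (neg_sup : ∀ a b : L, neg (a ⊔ b) = neg a ⊓ neg b)
    (neg_inf : ∀ a b : L, neg (a ⊓ b) = neg a ⊔ neg b)
    (T1 : ∀ a b : L, I (a ⊓ b) = I a ⊓ I b)
    (T2 : ∀ a : L, I (I a) = I a)
    (T3 : ∀ a : L, I a ≤ a)
    (T4 : I (⊤ : L) = ⊤)
    (T5 : ∀ a : L, neg (I (neg (I a))) = I a) :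
    ∃ f : {x : L // ∃ a : L, x = I a} ≃o {x : L // ∃ a : L, x = neg (I (neg a))},
      ∀ α : {x : L // ∃ a : L, x = I a}, (f α : L) = neg (I (neg (α : L))) :=
  stmt10_general neg I neg_neg T5
end

section
/- In any tqBa5, for every α in the left kernel K_I, the element ∼α := I(¬α) satisfies ∼∼α = α. -/
theorem stmt11_general {L : Type*} (neg I : L → L)
    (T2 : ∀ a : L, I (I a) = I a)
    (T5 : ∀ a : L, neg (I (neg (I a))) = I a) :
    ∀ α : L, (∃ a : L, α = I a) → I (neg (I (neg α))) = α := by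
  rintro α ⟨a, rfl⟩
  rw [T5, T2]

theorem stmt11 {L : Type*} [DistribLattice L] [BoundedOrder L] (neg I : L → L)
    (neg_neg : ∀ a : L, neg (neg a) = a)
    (neg_sup : ∀ a b : L, neg (a ⊔ b) = neg a ⊓ neg b)
    (neg_inf : ∀ a b : L, neg (a ⊓ b) = neg a ⊔ neg b)
    (T1 : ∀ a b : L, I (a ⊓ b) = I a ⊓ I b)
    (T2 : ∀ a : L, I (I a) = I a)
    (T3 : ∀ a : L, I a ≤ a)
    (T4 : I (⊤ : L) = ⊤)
    (T5 : ∀ a : L, neg (I (neg (I a))) = I a) :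
    ∀ α : L, (∃ a : L, α = I a) → I (neg (I (neg α))) = α :=
  stmt11_general neg I T2 T5
end

section
/- In any tqBa5, for α, β in the kernel K_I, ∼(α ∪ β) = ∼α ∩ ∼β, where ∼α := I¬α, α ∪ β := I(α ∨ β), and α ∩ β := I(α ∧ β). Equivalently, I¬I(Ia ∨ Ib) = I(I¬Ia ∧ I¬Ib) for all a, b. -/
/-! The images of `I` are exactly its fixed points, and T5 makes `¬` map them into themselves.
Both sides therefore reduce, after `I (x ⊓ y) = I x ⊓ I y` and `I (Ia ⊔ Ib) = Ia ⊔ Ib`,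
to `¬Ia ⊓ ¬Ib`. -/

section InteriorOperator

variable {L : Type*} [Lattice L] {I : L → L}

theorem monotone_of_map_inf (map_inf : ∀ a b : L, I (a ⊓ b) = I a ⊓ I b) : Monotone I := by
  intro a b hab
  calc I a = I (a ⊓ b) := by rw [inf_eq_left.mpr hab]
    _ = I a ⊓ I b := map_inf a b
    _ ≤ I b := inf_le_right

theorem map_sup_map_eq (map_inf : ∀ a b : L, I (a ⊓ b) = I a ⊓ I b)
    (idem : ∀ a : L, I (I a) = I a) (le : ∀ a : L, I a ≤ a) (a b : L) :
    I (I a ⊔ I b) = I a ⊔ I b := by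
  have mono := monotone_of_map_inf map_inf
  refine le_antisymm (le _) (sup_le ?_ ?_)
  · calc I a = I (I a) := (idem a).symm
      _ ≤ I (I a ⊔ I b) := mono le_sup_left
  · calc I b = I (I b) := (idem b).symm
      _ ≤ I (I a ⊔ I b) := mono le_sup_right

end InteriorOperator

theorem map_neg_map_eq {L : Type*} {neg I : L → L} (neg_neg : ∀ a : L, neg (neg a) = a)
    (T5 : ∀ a : L, neg (I (neg (I a))) = I a) (a : L) :
    I (neg (I a)) = neg (I a) := by
  simpa only [neg_neg] using congrArg neg (T5 a)

theorem stmt12_general {L : Type*} [DistribLattice L] (neg I : L → L)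
    (neg_neg : ∀ a : L, neg (neg a) = a)
    (neg_sup : ∀ a b : L, neg (a ⊔ b) = neg a ⊓ neg b)
    (T1 : ∀ a b : L, I (a ⊓ b) = I a ⊓ I b)
    (T2 : ∀ a : L, I (I a) = I a)
    (T3 : ∀ a : L, I a ≤ a)
    (T5 : ∀ a : L, neg (I (neg (I a))) = I a) :
    ∀ a b : L, I (neg (I (I a ⊔ I b))) = I (I (neg (I a)) ⊓ I (neg (I b))) := by
  intro a b
  have neg_fixed := map_neg_map_eq neg_neg T5
  rw [T1, T2, T2, neg_fixed, neg_fixed, neg_fixed, map_sup_map_eq T1 T2 T3, neg_sup]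

theorem stmt12 {L : Type*} [DistribLattice L] [BoundedOrder L] (neg I : L → L)
    (neg_neg : ∀ a : L, neg (neg a) = a)
    (neg_sup : ∀ a b : L, neg (a ⊔ b) = neg a ⊓ neg b)
    (neg_inf : ∀ a b : L, neg (a ⊓ b) = neg a ⊔ neg b)
    (T1 : ∀ a b : L, I (a ⊓ b) = I a ⊓ I b)
    (T2 : ∀ a : L, I (I a) = I a)
    (T3 : ∀ a : L, I a ≤ a)
    (T4 : I (⊤ : L) = ⊤)
    (T5 : ∀ a : L, neg (I (neg (I a))) = I a) :
    ∀ a b : L, I (neg (I (I a ⊔ I b))) = I (I (neg (I a)) ⊓ I (neg (I b))) :=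
  stmt12_general neg I neg_neg neg_sup T1 T2 T3 T5
end

section
/- In any IA1 (a tqBa5 additionally satisfying T6: Ia ∨ ¬Ia = ⊤), the kernel K_I with operations ∪, ∩, ∼ (α∪β := I(α∨β), α∩β := I(α∧β), ∼α := I¬α) is a Boolean algebra; in particular ∼α ∪ α = ⊤ for all α ∈ K_I. -/
/-!
Since `I` is idempotent, `K_I` is the set of fixed points of `I`. It is closed under `⊓` by T1 and
under `¬` by T5, hence under `⊔` by De Morgan. So on `K_I` the operations `∪, ∩, ∼` are just
`⊔, ⊓, ¬`, and every law reduces to the corresponding law of the distributive lattice `L`, with T6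
supplying the complement laws.
-/

open Function

namespace DeMorganInterior

variable {L : Type*} {neg I : L → L}

theorem isFixedPt_neg (neg_neg : Involutive neg) (neg_I_neg_I : ∀ a : L, neg (I (neg (I a))) = I a)
    {x : L} (hx : IsFixedPt I x) : IsFixedPt I (neg x) := by
  have h := congrArg neg (neg_I_neg_I x)
  rwa [neg_neg, hx.eq] at h

variable [Lattice L]

theorem neg_top_eq_bot [BoundedOrder L] (neg_neg : Involutive neg)
    (neg_sup : ∀ a b : L, neg (a ⊔ b) = neg a ⊓ neg b) : neg ⊤ = ⊥ :=
  calc neg ⊤ = neg (⊤ ⊔ neg ⊥) := by rw [top_sup_eq]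
    _ = ⊥ := by rw [neg_sup, neg_neg, inf_bot_eq]

theorem isFixedPt_inf (I_inf : ∀ a b : L, I (a ⊓ b) = I a ⊓ I b) {x y : L}
    (hx : IsFixedPt I x) (hy : IsFixedPt I y) : IsFixedPt I (x ⊓ y) := by
  rw [IsFixedPt, I_inf, hx.eq, hy.eq]

theorem isFixedPt_sup (neg_neg : Involutive neg) (neg_sup : ∀ a b : L, neg (a ⊔ b) = neg a ⊓ neg b)
    (I_inf : ∀ a b : L, I (a ⊓ b) = I a ⊓ I b) (neg_I_neg_I : ∀ a : L, neg (I (neg (I a))) = I a)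
    {x y : L} (hx : IsFixedPt I x) (hy : IsFixedPt I y) : IsFixedPt I (x ⊔ y) := by
  have h : IsFixedPt I (neg (x ⊔ y)) := by
    rw [neg_sup]
    exact isFixedPt_inf I_inf (isFixedPt_neg neg_neg neg_I_neg_I hx)
      (isFixedPt_neg neg_neg neg_I_neg_I hy)
  simpa only [neg_neg (x ⊔ y)] using isFixedPt_neg neg_neg neg_I_neg_I h

end DeMorganInterior

open DeMorganInterior

theorem stmt14_general {L : Type*} [DistribLattice L] [BoundedOrder L] (neg I : L → L)
    (neg_neg : ∀ a : L, neg (neg a) = a)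
    (neg_sup : ∀ a b : L, neg (a ⊔ b) = neg a ⊓ neg b)
    (neg_inf : ∀ a b : L, neg (a ⊓ b) = neg a ⊔ neg b)
    (T1 : ∀ a b : L, I (a ⊓ b) = I a ⊓ I b)
    (T2 : ∀ a : L, I (I a) = I a)
    (T5 : ∀ a : L, neg (I (neg (I a))) = I a)
    (T6 : ∀ a : L, I a ⊔ neg (I a) = ⊤) :
    (∀ α β γ : L, (∃ a : L, α = I a) → (∃ b : L, β = I b) → (∃ c : L, γ = I c) →
      I (α ⊔ β) = I (β ⊔ α) ∧
      I (α ⊓ β) = I (β ⊓ α) ∧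
      I (I (α ⊔ β) ⊔ γ) = I (α ⊔ I (β ⊔ γ)) ∧
      I (I (α ⊓ β) ⊓ γ) = I (α ⊓ I (β ⊓ γ)) ∧
      I (α ⊔ I (α ⊓ β)) = α ∧
      I (α ⊓ I (α ⊔ β)) = α ∧
      I (α ⊓ I (β ⊔ γ)) = I (I (α ⊓ β) ⊔ I (α ⊓ γ)) ∧
      I (α ⊓ (⊤ : L)) = α ∧
      I (α ⊔ (⊥ : L)) = α ∧
      I (neg (I (neg α))) = α ∧
      I (neg (I (α ⊔ β))) = I (I (neg α) ⊓ I (neg β)) ∧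
      I (neg (I (α ⊓ β))) = I (I (neg α) ⊔ I (neg β))) ∧
    (∀ α : L, (∃ a : L, α = I a) →
      I (I (neg α) ⊔ α) = (⊤ : L) ∧ I (α ⊓ I (neg α)) = (⊥ : L)) := by
  have mem_kernel : ∀ {α : L}, (∃ a, α = I a) → IsFixedPt I α := by
    rintro _ ⟨a, rfl⟩
    exact T2 a
  constructor
  · intro α β γ hα hβ hγ
    replace hα := mem_kernel hα
    replace hβ := mem_kernel hβ
    replace hγ := mem_kernel hγ
    simp only [IsFixedPt.eq, hα, hβ, hγ, isFixedPt_sup neg_neg neg_sup T1 T5, isFixedPt_inf T1,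
      isFixedPt_neg neg_neg T5, sup_comm β α, inf_comm β α, sup_assoc, inf_assoc, sup_inf_self,
      inf_sup_self, inf_sup_left, inf_top_eq, sup_bot_eq, neg_neg, neg_sup, neg_inf, and_self]
  · intro α hα
    replace hα := mem_kernel hα
    have sup_neg_self : α ⊔ neg α = ⊤ := by simpa only [hα.eq] using T6 α
    have inf_neg_self : α ⊓ neg α = ⊥ :=
      calc α ⊓ neg α = neg (α ⊔ neg α) := by rw [neg_sup, neg_neg, inf_comm]
        _ = ⊥ := by rw [sup_neg_self, neg_top_eq_bot neg_neg neg_sup]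
    have hneg := isFixedPt_neg neg_neg T5 hα
    rw [hneg.eq, (isFixedPt_sup neg_neg neg_sup T1 T5 hneg hα).eq, (isFixedPt_inf T1 hα hneg).eq,
      sup_comm]
    exact ⟨sup_neg_self, inf_neg_self⟩

theorem stmt14 {L : Type*} [DistribLattice L] [BoundedOrder L] (neg I : L → L)
    (neg_neg : ∀ a : L, neg (neg a) = a)
    (neg_sup : ∀ a b : L, neg (a ⊔ b) = neg a ⊓ neg b)
    (neg_inf : ∀ a b : L, neg (a ⊓ b) = neg a ⊔ neg b)
    (T1 : ∀ a b : L, I (a ⊓ b) = I a ⊓ I b)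
    (T2 : ∀ a : L, I (I a) = I a)
    (T3 : ∀ a : L, I a ≤ a)
    (T4 : I (⊤ : L) = ⊤)
    (T5 : ∀ a : L, neg (I (neg (I a))) = I a)
    (T6 : ∀ a : L, I a ⊔ neg (I a) = ⊤) :
    (∀ α β γ : L, (∃ a : L, α = I a) → (∃ b : L, β = I b) → (∃ c : L, γ = I c) →
      I (α ⊔ β) = I (β ⊔ α) ∧
      I (α ⊓ β) = I (β ⊓ α) ∧
      I (I (α ⊔ β) ⊔ γ) = I (α ⊔ I (β ⊔ γ)) ∧
      I (I (α ⊓ β) ⊓ γ) = I (α ⊓ I (β ⊓ γ)) ∧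
      I (α ⊔ I (α ⊓ β)) = α ∧
      I (α ⊓ I (α ⊔ β)) = α ∧
      I (α ⊓ I (β ⊔ γ)) = I (I (α ⊓ β) ⊔ I (α ⊓ γ)) ∧
      I (α ⊓ (⊤ : L)) = α ∧
      I (α ⊔ (⊥ : L)) = α ∧
      I (neg (I (neg α))) = α ∧
      I (neg (I (α ⊔ β))) = I (I (neg α) ⊓ I (neg β)) ∧
      I (neg (I (α ⊓ β))) = I (I (neg α) ⊔ I (neg β))) ∧
    (∀ α : L, (∃ a : L, α = I a) →
      I (I (neg α) ⊔ α) = (⊤ : L) ∧ I (α ⊓ I (neg α)) = (⊥ : L)) :=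
  stmt14_general neg I neg_neg neg_sup neg_inf T1 T2 T5 T6
end

section
/- In any IA1, for each α in the kernel, ∼α := I¬α is the complement of α in K_I: α ∩ ∼α = 0 and α ∪ ∼α = 1 (where α∩β := I(α∧β), α∪β := I(α∨β), 0 := ⊥, 1 := ⊤). -/
/-! By T5, the negation of an element of `K_I` is again a fixed point of `I`, so `∼(I a) = ¬(I a)`.
Both claims then reduce to T6, `I a ∨ ¬I a = ⊤`, and its De Morgan dual `I a ∧ ¬I a = ⊥`,
together with `I ⊤ = ⊤` and `I ⊥ = ⊥`. -/

section DeMorgan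

variable {L : Type*} [Lattice L] [BoundedOrder L] {neg : L → L}

theorem neg_top_eq_bot_of_neg_inf (neg_neg : ∀ a, neg (neg a) = a)
    (neg_inf : ∀ a b, neg (a ⊓ b) = neg a ⊔ neg b) : neg ⊤ = ⊥ := by
  have neg_bot : neg ⊥ = ⊤ :=
    calc neg ⊥ = neg (⊥ ⊓ neg ⊤) := by rw [bot_inf_eq]
      _ = ⊤ := by rw [neg_inf, neg_neg, sup_top_eq]
  rw [← neg_bot, neg_neg]

theorem inf_neg_eq_bot_of_sup_neg_eq_top (neg_neg : ∀ a, neg (neg a) = a)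
    (neg_inf : ∀ a b, neg (a ⊓ b) = neg a ⊔ neg b) {x : L} (h : x ⊔ neg x = ⊤) :
    x ⊓ neg x = ⊥ :=
  calc x ⊓ neg x = neg (neg x ⊔ neg (neg x)) := by rw [← neg_inf, neg_neg]
    _ = ⊥ := by rw [neg_neg, sup_comm, h, neg_top_eq_bot_of_neg_inf neg_neg neg_inf]

end DeMorgan

theorem stmt15_general {L : Type*} [DistribLattice L] [BoundedOrder L] (neg I : L → L)
    (neg_neg : ∀ a : L, neg (neg a) = a)
    (neg_inf : ∀ a b : L, neg (a ⊓ b) = neg a ⊔ neg b)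
    (T3 : ∀ a : L, I a ≤ a)
    (T4 : I (⊤ : L) = ⊤)
    (T5 : ∀ a : L, neg (I (neg (I a))) = I a)
    (T6 : ∀ a : L, I a ⊔ neg (I a) = ⊤) :
    ∀ α : L, (∃ a : L, α = I a) →
      I (α ⊓ I (neg α)) = (⊥ : L) ∧ I (α ⊔ I (neg α)) = (⊤ : L) := by
  rintro α ⟨a, rfl⟩
  have neg_I_fixed : I (neg (I a)) = neg (I a) :=
    (neg_neg _).symm.trans (congrArg neg (T5 a))
  have inf_neg_I : I a ⊓ neg (I a) = ⊥ := inf_neg_eq_bot_of_sup_neg_eq_top neg_neg neg_inf (T6 a)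
  refine ⟨?_, ?_⟩
  · rw [neg_I_fixed, inf_neg_I]
    exact le_bot_iff.mp (T3 ⊥)
  · rw [neg_I_fixed, T6, T4]

theorem stmt15 {L : Type*} [DistribLattice L] [BoundedOrder L] (neg I : L → L)
    (neg_neg : ∀ a : L, neg (neg a) = a)
    (neg_sup : ∀ a b : L, neg (a ⊔ b) = neg a ⊓ neg b)
    (neg_inf : ∀ a b : L, neg (a ⊓ b) = neg a ⊔ neg b)
    (T1 : ∀ a b : L, I (a ⊓ b) = I a ⊓ I b)
    (T2 : ∀ a : L, I (I a) = I a)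
    (T3 : ∀ a : L, I a ≤ a)
    (T4 : I (⊤ : L) = ⊤)
    (T5 : ∀ a : L, neg (I (neg (I a))) = I a)
    (T6 : ∀ a : L, I a ⊔ neg (I a) = ⊤) :
    ∀ α : L, (∃ a : L, α = I a) →
      I (α ⊓ I (neg α)) = (⊥ : L) ∧ I (α ⊔ I (neg α)) = (⊤ : L) :=
  stmt15_general neg I neg_neg neg_inf T3 T4 T5 T6
end

section
/- Let T be an IA3, i.e., a tqBa5 additionally satisfying T8: Ia ≤ Ib and Ca ≤ Cb imply a ≤ b. Then for all a, b ∈ L, a ∧ Cb ≤ Ia ∨ b. -/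
/-!
Apply T8 to `a ⊓ C b` and `I a ⊔ b`, where `C x = ¬ I ¬ x`. Interiors compare because
`I (a ⊓ C b) ≤ I a = I (I a) ≤ I (I a ⊔ b)`. Closures compare because T5 gives
`C (I a ⊔ b) = C (I a) ⊔ C b = I a ⊔ C b`, while `C (a ⊓ C b) ≤ C (C b) = C b`.
-/

namespace TqBa

theorem closure_closure {α : Type*} {neg I : α → α} (neg_neg : ∀ a, neg (neg a) = a)
    (I_idem : ∀ a, I (I a) = I a) (a : α) :
    neg (I (neg (neg (I (neg a))))) = neg (I (neg a)) := by
  rw [neg_neg, I_idem]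

variable {L : Type*} [Lattice L] {neg I : L → L}

theorem neg_sup_of_neg_inf (neg_neg : ∀ a, neg (neg a) = a)
    (neg_inf : ∀ a b, neg (a ⊓ b) = neg a ⊔ neg b) (a b : L) :
    neg (a ⊔ b) = neg a ⊓ neg b := by
  rw [← neg_neg (neg a ⊓ neg b), neg_inf, neg_neg, neg_neg]

theorem antitone_of_neg_inf (neg_inf : ∀ a b, neg (a ⊓ b) = neg a ⊔ neg b) : Antitone neg :=
  fun x y h => by
    rw [← inf_eq_left.mpr h, neg_inf]
    exact le_sup_right

theorem monotone_of_map_inf (map_inf : ∀ a b, I (a ⊓ b) = I a ⊓ I b) : Monotone I :=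
  fun x y h => by
    rw [← inf_eq_left.mpr h, map_inf]
    exact inf_le_right

theorem monotone_closure (neg_inf : ∀ a b, neg (a ⊓ b) = neg a ⊔ neg b)
    (map_inf : ∀ a b, I (a ⊓ b) = I a ⊓ I b) : Monotone fun a => neg (I (neg a)) :=
  fun _ _ h => antitone_of_neg_inf neg_inf <|
    monotone_of_map_inf map_inf <| antitone_of_neg_inf neg_inf h

theorem closure_interior_sup (neg_neg : ∀ a, neg (neg a) = a)
    (neg_inf : ∀ a b, neg (a ⊓ b) = neg a ⊔ neg b) (map_inf : ∀ a b, I (a ⊓ b) = I a ⊓ I b)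
    (closure_interior : ∀ a, neg (I (neg (I a))) = I a) (a b : L) :
    neg (I (neg (I a ⊔ b))) = I a ⊔ neg (I (neg b)) := by
  rw [neg_sup_of_neg_inf neg_neg neg_inf, map_inf, neg_inf, closure_interior]

end TqBa

theorem stmt16_general {L : Type*} [DistribLattice L] (neg I : L → L)
    (neg_neg : ∀ a : L, neg (neg a) = a)
    (neg_inf : ∀ a b : L, neg (a ⊓ b) = neg a ⊔ neg b)
    (T1 : ∀ a b : L, I (a ⊓ b) = I a ⊓ I b)
    (T2 : ∀ a : L, I (I a) = I a)
    (T5 : ∀ a : L, neg (I (neg (I a))) = I a)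
    (T8 : ∀ a b : L, I a ≤ I b → neg (I (neg a)) ≤ neg (I (neg b)) → a ≤ b) :
    ∀ a b : L, a ⊓ neg (I (neg b)) ≤ I a ⊔ b := by
  intro a b
  have I_mono := TqBa.monotone_of_map_inf T1
  apply T8
  · calc I (a ⊓ neg (I (neg b))) ≤ I a := I_mono inf_le_left
      _ = I (I a) := (T2 a).symm
      _ ≤ I (I a ⊔ b) := I_mono le_sup_left
  · rw [TqBa.closure_interior_sup neg_neg neg_inf T1 T5]
    calc neg (I (neg (a ⊓ neg (I (neg b))))) ≤ neg (I (neg (neg (I (neg b))))) :=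
          TqBa.monotone_closure neg_inf T1 inf_le_right
      _ = neg (I (neg b)) := TqBa.closure_closure neg_neg T2 b
      _ ≤ I a ⊔ neg (I (neg b)) := le_sup_right

theorem stmt16 {L : Type*} [DistribLattice L] [BoundedOrder L] (neg I : L → L)
    (neg_neg : ∀ a : L, neg (neg a) = a)
    (neg_sup : ∀ a b : L, neg (a ⊔ b) = neg a ⊓ neg b)
    (neg_inf : ∀ a b : L, neg (a ⊓ b) = neg a ⊔ neg b)
    (T1 : ∀ a b : L, I (a ⊓ b) = I a ⊓ I b)
    (T2 : ∀ a : L, I (I a) = I a)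
    (T3 : ∀ a : L, I a ≤ a)
    (T4 : I (⊤ : L) = ⊤)
    (T5 : ∀ a : L, neg (I (neg (I a))) = I a)
    (T8 : ∀ a b : L, I a ≤ I b → neg (I (neg a)) ≤ neg (I (neg b)) → a ≤ b) :
    ∀ a b : L, a ⊓ neg (I (neg b)) ≤ I a ⊔ b :=
  stmt16_general neg I neg_neg neg_inf T1 T2 T5 T8
end

section
/- Conversely, a tqBa5 satisfying the inequality a ∧ Cb ≤ Ia ∨ b for all a, b also satisfies rule T8: Ia ≤ Ib and Ca ≤ Cb imply a ≤ b. -/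
/-! From `I a ≤ a` and the antitone involution `¬`, the operator `C a = ¬ I ¬ a` lies above `a`.
Hence `a ≤ C a ≤ C b`, so `a = a ∧ C b ≤ I a ∨ b`, and `I a ≤ I b ≤ b` gives `a ≤ b`. -/

theorem antitone_of_map_sup_eq_inf {L : Type*} [Lattice L] {f : L → L}
    (hf : ∀ a b : L, f (a ⊔ b) = f a ⊓ f b) : Antitone f := fun x y hxy =>
  calc f y = f (x ⊔ y) := by rw [sup_eq_right.mpr hxy]
    _ = f x ⊓ f y := hf x y
    _ ≤ f x := inf_le_left

theorem le_neg_map_neg {L : Type*} [Preorder L] {neg I : L → L} (hneg : Antitone neg)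
    (hinv : ∀ a : L, neg (neg a) = a) (hI : ∀ a : L, I a ≤ a) (a : L) :
    a ≤ neg (I (neg a)) :=
  (hinv a).symm.trans_le (hneg (hI (neg a)))

theorem stmt17_general {L : Type*} [DistribLattice L] (neg I : L → L)
    (neg_neg : ∀ a : L, neg (neg a) = a)
    (neg_sup : ∀ a b : L, neg (a ⊔ b) = neg a ⊓ neg b)
    (T3 : ∀ a : L, I a ≤ a)
    (h : ∀ a b : L, a ⊓ neg (I (neg b)) ≤ I a ⊔ b) :
    ∀ a b : L, I a ≤ I b → neg (I (neg a)) ≤ neg (I (neg b)) → a ≤ b := by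
  intro a b hI hC
  have ha_le_Cb : a ≤ neg (I (neg b)) :=
    (le_neg_map_neg (antitone_of_map_sup_eq_inf neg_sup) neg_neg T3 a).trans hC
  calc a ≤ a ⊓ neg (I (neg b)) := le_inf le_rfl ha_le_Cb
    _ ≤ I a ⊔ b := h a b
    _ ≤ b := sup_le (hI.trans (T3 b)) le_rfl

theorem stmt17 {L : Type*} [DistribLattice L] [BoundedOrder L] (neg I : L → L)
    (neg_neg : ∀ a : L, neg (neg a) = a)
    (neg_sup : ∀ a b : L, neg (a ⊔ b) = neg a ⊓ neg b)
    (neg_inf : ∀ a b : L, neg (a ⊓ b) = neg a ⊔ neg b)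
    (T1 : ∀ a b : L, I (a ⊓ b) = I a ⊓ I b)
    (T2 : ∀ a : L, I (I a) = I a)
    (T3 : ∀ a : L, I a ≤ a)
    (T4 : I (⊤ : L) = ⊤)
    (T5 : ∀ a : L, neg (I (neg (I a))) = I a)
    (h : ∀ a b : L, a ⊓ neg (I (neg b)) ≤ I a ⊔ b) :
    ∀ a b : L, I a ≤ I b → neg (I (neg a)) ≤ neg (I (neg b)) → a ≤ b :=
  stmt17_general neg I neg_neg neg_sup T3 h
end
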